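/- Let F be a field, let A₁, …, A_k be finite subsets of F each of size N ≥ 1, and let f be a nonzero polynomial in k variables over F. Then the number of points in the Cartesian product A₁ × ⋯ × A_k at which f vanishes is at most (deg f)·N^(k-1). -/

import Mathlib

open scoped Classical

open Finset MvPolynomial

lemma MvPolynomial.card_zeros_mul_le_totalDegree_mul_pow {R : Type*} [CommRing R] [IsDomain R]
    [DecidableEq R] {n N : ℕ} {p : MvPolynomial (Fin n) R} (hp : p ≠ 0)
    (A : Fin n → Finset R) (hA : ∀ i, #(A i) = N) :
    #{x ∈ Fintype.piFinset A | eval x p = 0} * N ≤ p.totalDegree * N ^ n := by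
  rcases N.eq_zero_or_pos with rfl | hN
  · simp
  have hsup : (p.support.sup fun s ↦ ∑ i, (s i / #(A i) : ℚ≥0)) ≤ p.totalDegree / N :=
    Finset.sup_le fun s hs ↦ by
      simp only [hA, ← sum_div]
      gcongr
      exact_mod_cast (Finsupp.sum_fintype s (fun _ e ↦ e) fun _ ↦ rfl) ▸ le_totalDegree hs
  have h := (schwartz_zippel_sup_sum hp A).trans hsup
  simp only [hA, prod_const, card_univ, Fintype.card_fin] at h
  rw [div_le_div_iff₀ (by positivity) (by positivity)] at h
  exact_mod_cast h

/-- **Schwartz–Zippel lemma.** -/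
theorem schwartz_zippel {F : Type*} [Field F] (k N : ℕ) (hN : 1 ≤ N)
    (A : Fin k → Finset F) (hA : ∀ i, (A i).card = N)
    (f : MvPolynomial (Fin k) F) (hf : f ≠ 0) :
    ((Fintype.piFinset A).filter (fun v => MvPolynomial.eval v f = 0)).card ≤
      f.totalDegree * N ^ (k - 1) := by
  have hzeros := card_zeros_mul_le_totalDegree_mul_pow hf A hA
  -- for `k = 0` the truncated `k - 1` makes this `1 ≤ N`
  have hpow : N ^ k ≤ N ^ (k - 1) * N := by
    rw [← pow_succ]
    exact Nat.pow_le_pow_right hN (by omega)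
  refine Nat.le_of_mul_le_mul_right ?_ hN
  calc _ ≤ f.totalDegree * N ^ k := hzeros
    _ ≤ f.totalDegree * N ^ (k - 1) * N := by rw [mul_assoc]; gcongr
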